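/- For nonnegative integers a, b, x, y: ∑_{k=0}^{min(a,b)} q^{(a-k)(b-k)} · C_q(x+y+k, k) · C_q(y, a−k) · C_q(x, b−k) = C_q(x+a, b) · C_q(y+b, a). -/

import Mathlib

/-!
As functions `F(a, b, x, y)`, both sides satisfy the recursion
`F(a, b+1, x+1, y) = F(a, b, x, y+1) + q^(b+1) F(a, b+1, x, y)`
and agree when `b = 0` or `x = 0`. For the product this is q-Pascal applied to `C_q(x+a+1, b+1)`.
For the sum, q-Pascal on `C_q(x+1, b+1-k)` and then on `C_q(x+y+1+k, k)` splits each term into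
three; after shifting `k` in one of them, the first two recombine, by q-Pascal on `C_q(y+1, a-k)`,
into the terms of `F(a, b, x, y+1)`. At `x = 0` only the term `k = b` survives, and the base case
is the identity `C_q(n, k) C_q(k, s) = C_q(n, s) C_q(n-s, k-s)`.
-/

open Finset

/-- The q-Pochhammer symbol `(a;q)_n = ∏_{j=0}^{n-1} (1 - a q^j)`. -/
noncomputable def qPoch (q a : RatFunc ℚ) (n : ℕ) : RatFunc ℚ :=
  ∏ j ∈ Finset.range n, (1 - a * q ^ j)

/-- The Gaussian (q-binomial) coefficient `C_q(m, k)`, defined as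
`(q;q)_m / ((q;q)_k (q;q)_{m-k})` for `0 ≤ k ≤ m`, and `0` otherwise. -/
noncomputable def qBinom (q : RatFunc ℚ) (m k : ℤ) : RatFunc ℚ :=
  if 0 ≤ k ∧ k ≤ m then
    qPoch q q m.toNat / (qPoch q q k.toNat * qPoch q q (m - k).toNat)
  else 0

lemma RatFunc.one_sub_X_pow_ne_zero {K : Type*} [Field K] {n : ℕ} (hn : 0 < n) :
    (1 : RatFunc K) - RatFunc.X ^ n ≠ 0 := by
  have h := RatFunc.algebraMap_ne_zero (Polynomial.X_pow_sub_C_ne_zero hn (1 : K))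
  rw [map_sub, map_pow, RatFunc.algebraMap_X, RatFunc.algebraMap_C, map_one] at h
  rw [← neg_sub]
  exact neg_ne_zero.2 h

lemma qPoch_succ (q a : RatFunc ℚ) (n : ℕ) :
    qPoch q a (n + 1) = qPoch q a n * (1 - a * q ^ n) :=
  prod_range_succ _ n

lemma qPoch_zero (q a : RatFunc ℚ) : qPoch q a 0 = 1 :=
  prod_range_zero _

lemma qPoch_X_ne_zero (n : ℕ) : qPoch RatFunc.X RatFunc.X n ≠ 0 :=
  prod_ne_zero_iff.2 fun j _ => by
    rw [← pow_succ']
    exact RatFunc.one_sub_X_pow_ne_zero j.succ_pos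

section QBinom

variable {q : RatFunc ℚ}

lemma qBinom_of_neg {m k : ℤ} (hk : k < 0) : qBinom q m k = 0 :=
  if_neg (by omega)

lemma qBinom_of_lt {m k : ℤ} (hmk : m < k) : qBinom q m k = 0 :=
  if_neg (by omega)

lemma qBinom_of_le {m k : ℤ} (hk : 0 ≤ k) (hkm : k ≤ m) :
    qBinom q m k = qPoch q q m.toNat / (qPoch q q k.toNat * qPoch q q (m - k).toNat) :=
  if_pos ⟨hk, hkm⟩

lemma qBinom_zero (hq : ∀ n, qPoch q q n ≠ 0) {m : ℤ} (hm : 0 ≤ m) : qBinom q m 0 = 1 := by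
  rw [qBinom_of_le le_rfl hm, sub_zero, Int.toNat_zero, qPoch_zero, one_mul,
    div_self (hq _)]

lemma qBinom_self (hq : ∀ n, qPoch q q n ≠ 0) {m : ℤ} (hm : 0 ≤ m) : qBinom q m m = 1 := by
  rw [qBinom_of_le hm le_rfl, sub_self, Int.toNat_zero, qPoch_zero, mul_one,
    div_self (hq _)]

lemma one_sub_mul_pow_ne_zero (hq : ∀ n, qPoch q q n ≠ 0) (n : ℕ) : 1 - q * q ^ n ≠ 0 :=
  right_ne_zero_of_mul (qPoch_succ q q n ▸ hq (n + 1))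

lemma qBinom_succ (hq : ∀ n, qPoch q q n ≠ 0) {m : ℤ} (hm : 0 ≤ m) (k : ℤ) :
    qBinom q (m + 1) k = qBinom q m (k - 1) + q ^ k * qBinom q m k := by
  rcases lt_trichotomy k 0 with hk | rfl | hk
  · rw [qBinom_of_neg hk, qBinom_of_neg (by omega), qBinom_of_neg hk, mul_zero, add_zero]
  · rw [qBinom_zero hq (by omega), qBinom_of_neg (by omega), qBinom_zero hq hm]
    simp
  rcases lt_trichotomy k (m + 1) with hkm | rfl | hkm
  · obtain ⟨K, rfl⟩ : ∃ K : ℕ, k = K + 1 := ⟨(k - 1).toNat, by omega⟩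
    obtain ⟨J, rfl⟩ : ∃ J : ℕ, m = K + 1 + J := ⟨(m - K - 1).toNat, by omega⟩
    rw [qBinom_of_le (by omega) (by omega), qBinom_of_le (by omega) (by omega),
      qBinom_of_le (by omega) (by omega),
      show ((K : ℤ) + 1 + J + 1).toNat = K + J + 1 + 1 by omega,
      show ((K : ℤ) + 1).toNat = K + 1 by omega,
      show ((K : ℤ) + 1 + J + 1 - (K + 1)).toNat = J + 1 by omega,
      show ((K : ℤ) + 1 + J).toNat = K + J + 1 by omega,
      show ((K : ℤ) + 1 - 1).toNat = K by omega,
      show ((K : ℤ) + 1 + J - (K + 1 - 1)).toNat = J + 1 by omega,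
      show ((K : ℤ) + 1 + J - (K + 1)).toNat = J by omega,
      show q ^ ((K : ℤ) + 1) = q ^ (K + 1) by norm_cast,
      qPoch_succ _ _ (K + J + 1), qPoch_succ _ _ K, qPoch_succ _ _ J]
    field_simp [hq, one_sub_mul_pow_ne_zero hq]
    ring
  · rw [qBinom_self hq (by omega), add_sub_cancel_right, qBinom_self hq hm,
      qBinom_of_lt (by omega), mul_zero, add_zero]
  · rw [qBinom_of_lt hkm, qBinom_of_lt (by omega), qBinom_of_lt (by omega), mul_zero, add_zero]

lemma qBinom_mul_qBinom (hq : ∀ n, qPoch q q n ≠ 0) (n k s : ℤ) :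
    qBinom q n k * qBinom q k s = qBinom q n s * qBinom q (n - s) (k - s) := by
  by_cases hs : s < 0
  · rw [qBinom_of_neg hs, qBinom_of_neg hs, mul_zero, zero_mul]
  by_cases hks : k < s
  · rw [qBinom_of_lt hks, qBinom_of_neg (by omega : k - s < 0), mul_zero, mul_zero]
  by_cases hnk : n < k
  · rw [qBinom_of_lt hnk, qBinom_of_lt (by omega : n - s < k - s), zero_mul, mul_zero]
  obtain ⟨S, rfl⟩ : ∃ S : ℕ, s = S := ⟨s.toNat, by omega⟩
  obtain ⟨D, rfl⟩ : ∃ D : ℕ, k = S + D := ⟨(k - S).toNat, by omega⟩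
  obtain ⟨E, rfl⟩ : ∃ E : ℕ, n = S + D + E := ⟨(n - S - D).toNat, by omega⟩
  rw [qBinom_of_le (by omega) (by omega), qBinom_of_le (by omega) (by omega),
    qBinom_of_le (by omega) (by omega), qBinom_of_le (by omega) (by omega),
    show ((S : ℤ) + D + E).toNat = S + D + E by omega,
    show ((S : ℤ) + D).toNat = S + D by omega,
    show ((S : ℤ) + D + E - (S + D)).toNat = E by omega, show (S : ℤ).toNat = S by omega,
    show ((S : ℤ) + D - S).toNat = D by omega,
    show ((S : ℤ) + D + E - S).toNat = D + E by omega,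
    show ((S : ℤ) + D + E - S - (S + D - S)).toNat = E by omega]
  field_simp [hq]

end QBinom

lemma Finset.sum_range_succ_add_shift {M : Type*} [AddCommMonoid M] {f g : ℕ → M} {n : ℕ}
    (hf : f n = 0) (hg : g 0 = 0) :
    ∑ k ∈ range (n + 1), (f k + g k) = ∑ k ∈ range n, (f k + g (k + 1)) := by
  rw [sum_add_distrib, sum_add_distrib, sum_range_succ, sum_range_succ' g, hf, hg, add_zero,
    add_zero]

-- Integer exponents avoid truncated subtraction; summing over `k ≤ b` instead of `k ≤ min a b`
-- only adds vanishing terms and makes the recursion in `b` clean.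
noncomputable def stanleyTerm (q : RatFunc ℚ) (a b x y k : ℤ) : RatFunc ℚ :=
  q ^ ((a - k) * (b - k)) * qBinom q (x + y + k) k * qBinom q y (a - k) * qBinom q x (b - k)

noncomputable def stanleySum (q : RatFunc ℚ) (a b x y : ℕ) : RatFunc ℚ :=
  ∑ k ∈ range (b + 1), stanleyTerm q a b x y k

section Stanley

variable {q : RatFunc ℚ}

lemma stanleyTerm_eq_zero_of_lt {a b x y k : ℤ} (hak : a < k) : stanleyTerm q a b x y k = 0 := by
  rw [stanleyTerm, qBinom_of_neg (by omega : a - k < 0), mul_zero, zero_mul]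

lemma stanleyTerm_split (hq0 : q ≠ 0) (hq : ∀ n, qPoch q q n ≠ 0) {x y k : ℤ} (hx : 0 ≤ x)
    (hxyk : 0 ≤ x + y + k) (a b : ℤ) :
    stanleyTerm q a (b + 1) (x + 1) y k =
      (q ^ ((a - k) * (b - k)) * q ^ (a - k) * qBinom q (x + (y + 1) + k) k *
          qBinom q y (a - k) * qBinom q x (b - k) +
        q ^ ((a - k + 1) * (b - k + 1)) * qBinom q (x + y + k) (k - 1) *
          qBinom q y (a - k) * qBinom q x (b - k + 1)) +
      q ^ (b + 1) * stanleyTerm q a (b + 1) x y k := by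
  have hpow : q ^ (b + 1) = q ^ (b + 1 - k) * q ^ k := by
    rw [← zpow_add₀ hq0, sub_add_cancel]
  rw [hpow, stanleyTerm, stanleyTerm, qBinom_succ hq hx,
    show x + 1 + y + k = x + y + k + 1 by ring, show x + (y + 1) + k = x + y + k + 1 by ring,
    qBinom_succ hq hxyk,
    show b + 1 - k - 1 = b - k by ring, show b - k + 1 = b + 1 - k by ring,
    show (a - k) * (b + 1 - k) = (a - k) * (b - k) + (a - k) by ring,
    show (a - k + 1) * (b + 1 - k) = (a - k) * (b - k) + (a - k) + (b + 1 - k) by ring]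
  simp only [zpow_add₀ hq0]
  ring

lemma stanleyTerm_combine (hq : ∀ n, qPoch q q n ≠ 0) {y : ℤ} (hy : 0 ≤ y) (a b x k : ℤ) :
    q ^ ((a - k) * (b - k)) * q ^ (a - k) * qBinom q (x + (y + 1) + k) k *
        qBinom q y (a - k) * qBinom q x (b - k) +
      q ^ ((a - (k + 1) + 1) * (b - (k + 1) + 1)) * qBinom q (x + y + (k + 1)) (k + 1 - 1) *
        qBinom q y (a - (k + 1)) * qBinom q x (b - (k + 1) + 1) =
      stanleyTerm q a b x (y + 1) k := by
  rw [stanleyTerm, qBinom_succ hq hy,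
    show (a - (k + 1) + 1) * (b - (k + 1) + 1) = (a - k) * (b - k) by ring,
    show x + y + (k + 1) = x + (y + 1) + k by ring, show k + 1 - 1 = k by ring,
    show a - (k + 1) = a - k - 1 by ring, show b - (k + 1) + 1 = b - k by ring]
  ring

lemma stanleySum_succ_succ (hq0 : q ≠ 0) (hq : ∀ n, qPoch q q n ≠ 0) (a b x y : ℕ) :
    stanleySum q a (b + 1) (x + 1) y =
      stanleySum q a b x (y + 1) + q ^ ((b : ℤ) + 1) * stanleySum q a (b + 1) x y := by
  simp only [stanleySum, Nat.cast_add, Nat.cast_one]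
  rw [sum_congr rfl fun k _ => stanleyTerm_split hq0 hq (Nat.cast_nonneg x) (by positivity) a b,
    sum_add_distrib, ← mul_sum, sum_range_succ_add_shift]
  · congr 1
    refine sum_congr rfl fun k _ => ?_
    push_cast
    exact stanleyTerm_combine hq (Nat.cast_nonneg y) a b x k
  · rw [qBinom_of_neg (show (b : ℤ) - ↑(b + 1) < 0 by omega), mul_zero]
  · rw [qBinom_of_neg (show ((0 : ℕ) : ℤ) - 1 < 0 by omega), mul_zero, zero_mul, zero_mul]

lemma stanleySum_zero_right (hq : ∀ n, qPoch q q n ≠ 0) (a x y : ℕ) :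
    stanleySum q a 0 x y = qBinom q y a := by
  rw [stanleySum, sum_range_one, stanleyTerm]
  simp only [Nat.cast_zero, sub_zero, mul_zero, zpow_zero, add_zero]
  rw [qBinom_zero hq (by positivity), qBinom_zero hq (by positivity), one_mul, one_mul, mul_one]

lemma stanleySum_zero_left (hq : ∀ n, qPoch q q n ≠ 0) (a b y : ℕ) :
    stanleySum q a b 0 y = qBinom q (y + b) b * qBinom q y (a - b) := by
  rw [stanleySum, sum_range_succ, sum_eq_zero fun k hk => ?_, zero_add, stanleyTerm]
  · rw [sub_self, mul_zero, zpow_zero, one_mul, Nat.cast_zero, zero_add, add_comm (y : ℤ),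
      qBinom_zero hq le_rfl, mul_one]
  · rw [mem_range] at hk
    rw [stanleyTerm, qBinom_of_lt (show ((0 : ℕ) : ℤ) < b - k by omega), mul_zero]

end Stanley

theorem stanleySum_eq_qBinom_mul_qBinom {q : RatFunc ℚ} (hq0 : q ≠ 0)
    (hq : ∀ n, qPoch q q n ≠ 0) (a b x y : ℕ) :
    stanleySum q a b x y = qBinom q (x + a) b * qBinom q (y + b) a := by
  induction b generalizing x y with
  | zero =>
    rw [stanleySum_zero_right hq, Nat.cast_zero, qBinom_zero hq (by positivity), one_mul, add_zero]
  | succ b ihb =>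
    induction x generalizing y with
    | zero =>
      rw [stanleySum_zero_left hq, Nat.cast_zero, zero_add, mul_comm (qBinom q a _),
        qBinom_mul_qBinom hq, add_sub_cancel_right]
    | succ x ihx =>
      rw [stanleySum_succ_succ hq0 hq, ihb, ihx]
      push_cast
      rw [show (x : ℤ) + 1 + a = x + a + 1 by ring, show (y : ℤ) + 1 + b = y + (b + 1) by ring,
        qBinom_succ hq (by positivity), add_sub_cancel_right]
      ring

theorem q_stanley (a b x y : ℕ) :
    ∑ k ∈ Finset.range (min a b + 1),
      (RatFunc.X : RatFunc ℚ) ^ ((a - k) * (b - k)) *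
        qBinom RatFunc.X ((x : ℤ) + y + k) (k : ℤ) *
        qBinom RatFunc.X (y : ℤ) ((a : ℤ) - k) *
        qBinom RatFunc.X (x : ℤ) ((b : ℤ) - k)
    = qBinom RatFunc.X ((x : ℤ) + a) (b : ℤ) * qBinom RatFunc.X ((y : ℤ) + b) (a : ℤ) := by
  rw [← stanleySum_eq_qBinom_mul_qBinom RatFunc.X_ne_zero qPoch_X_ne_zero, stanleySum]
  refine sum_subset_zero_on_sdiff (range_subset_range.2 (by omega)) (fun k hk => ?_)
    fun k hk => ?_
  · simp only [mem_sdiff, mem_range] at hk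
    exact stanleyTerm_eq_zero_of_lt (by omega)
  · rw [mem_range] at hk
    rw [stanleyTerm, ← Nat.cast_sub (by omega : k ≤ a), ← Nat.cast_sub (by omega : k ≤ b),
      ← Nat.cast_mul, zpow_natCast]
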